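/- For every p with 1 < p < 2 there exists a constant C_p > 0, depending only on p, such that for all d and all w, w̄ ∈ ℝᵈ with (w, w̄) ≠ (0, 0), (1/p)‖w̄‖_p^p − (1/p)‖w‖_p^p − ⟨J_p(w), w̄ − w⟩ ≥ C_p (‖w̄‖_p + ‖w‖_p)^{−(2−p)} ‖w̄ − w‖_p². -/

import Mathlib

/-!
On `[-R, R]` the scalar duality map `J_p` is strongly monotone with modulus `(p - 1) R^(p-2)`
(concavity of `t ↦ t^(p-1)` on `[0, R]`), so `|t|^p/p - (p - 1) R^(p-2) t²/2` is convex there.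
Taking `R = |a| + |b|` gives the one-dimensional inequality with weight `(|a| + |b|)^(p-2)` and
constant `(p - 1)/2`. Summing over coordinates, Hölder with exponents `2/p` and `2/(2-p)` bounds
`‖w̄ - w‖_p²` by the weighted sum times `‖|w| + |w̄|‖_p^(2-p)`, and Minkowski bounds the last
factor by `(‖w‖_p + ‖w̄‖_p)^(2-p)`.
-/

open Real Finset

noncomputable def dualityMap (r x : ℝ) : ℝ := Real.sign x * |x| ^ (r - 1)

lemma dualityMap_of_nonneg {r x : ℝ} (hr : 1 < r) (hx : 0 ≤ x) : dualityMap r x = x ^ (r - 1) := by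
  rcases hx.eq_or_lt with rfl | hx
  · simp [dualityMap, zero_rpow (by linarith : r - 1 ≠ 0)]
  · rw [dualityMap, sign_of_pos hx, abs_of_pos hx, one_mul]

@[simp]
lemma dualityMap_zero (r : ℝ) : dualityMap r 0 = 0 := by
  simp [dualityMap]

lemma dualityMap_neg (r x : ℝ) : dualityMap r (-x) = -dualityMap r x := by
  simp [dualityMap, Real.sign_neg]

lemma abs_rpow_sub_two_mul_self {p : ℝ} (x : ℝ) : |x| ^ (p - 2) * x = dualityMap p x := by
  rcases eq_or_ne x 0 with rfl | hx
  · simp [dualityMap]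
  have hsign : Real.sign x * |x| = x := by
    rcases hx.lt_or_gt with hx | hx
    · simp [sign_of_neg hx, abs_of_neg hx]
    · simp [sign_of_pos hx, abs_of_pos hx]
  rw [dualityMap, show p - 1 = p - 2 + 1 by ring, rpow_add_one (abs_ne_zero.2 hx)]
  linear_combination (-|x| ^ (p - 2)) * hsign

lemma hasDerivAt_abs_rpow_div {p : ℝ} (hp : 1 < p) (x : ℝ) :
    HasDerivAt (fun t => |t| ^ p / p) (dualityMap p x) x := by
  have := (hasDerivAt_abs_rpow x hp).div_const p
  rwa [mul_assoc, abs_rpow_sub_two_mul_self, mul_div_cancel_left₀ _ (by positivity)] at this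

lemma mul_rpow_sub_one_mul_sub_le_rpow_sub_rpow {q R x y : ℝ} (hq₀ : 0 < q) (hq₁ : q ≤ 1)
    (hx : 0 ≤ x) (hxy : x ≤ y) (hyR : y ≤ R) :
    q * R ^ (q - 1) * (y - x) ≤ y ^ q - x ^ q := by
  rcases hxy.eq_or_lt with rfl | hxy
  · simp
  have hy : 0 < y := hx.trans_lt hxy
  have hslope : q * y ^ (q - 1) ≤ slope (fun t => t ^ q) x y :=
    (concaveOn_rpow hq₀.le hq₁).le_slope_of_hasDerivAt hx hy.le hxy
      (hasDerivAt_rpow_const (Or.inl hy.ne'))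
  rw [slope_def_field, le_div_iff₀ (sub_pos.2 hxy)] at hslope
  calc q * R ^ (q - 1) * (y - x) ≤ q * y ^ (q - 1) * (y - x) := by
        have := rpow_le_rpow_of_nonpos hy hyR (by linarith : q - 1 ≤ 0)
        gcongr
    _ ≤ y ^ q - x ^ q := hslope

lemma mul_sub_le_dualityMap_sub_dualityMap {p R x y : ℝ} (hp₁ : 1 < p) (hp₂ : p ≤ 2)
    (hxR : -R ≤ x) (hxy : x ≤ y) (hyR : y ≤ R) :
    (p - 1) * R ^ (p - 2) * (y - x) ≤ dualityMap p y - dualityMap p x := by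
  have hnonneg : ∀ {x y : ℝ}, 0 ≤ x → x ≤ y → y ≤ R →
      (p - 1) * R ^ (p - 2) * (y - x) ≤ dualityMap p y - dualityMap p x := fun hx hxy hyR => by
    rw [dualityMap_of_nonneg hp₁ hx, dualityMap_of_nonneg hp₁ (hx.trans hxy),
      show p - 2 = p - 1 - 1 by ring]
    exact mul_rpow_sub_one_mul_sub_le_rpow_sub_rpow (by linarith) (by linarith) hx hxy hyR
  rcases le_total 0 x with hx | hx
  · exact hnonneg hx hxy hyR
  rcases le_total y 0 with hy | hy
  · have := hnonneg (neg_nonneg.2 hy) (neg_le_neg hxy) (neg_le.1 hxR)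
    rw [dualityMap_neg, dualityMap_neg] at this
    linarith
  · have h₁ := hnonneg le_rfl hy hyR
    have h₂ := hnonneg le_rfl (neg_nonneg.2 hx) (neg_le.1 hxR)
    rw [dualityMap_neg, dualityMap_zero] at h₂
    rw [dualityMap_zero] at h₁
    linarith

lemma ConvexOn.add_mul_sub_le_of_hasDerivAt {S : Set ℝ} {f : ℝ → ℝ} {f' a b : ℝ}
    (hf : ConvexOn ℝ S f) (ha : a ∈ S) (hb : b ∈ S) (hf' : HasDerivAt f f' a) :
    f a + f' * (b - a) ≤ f b := by
  rcases lt_trichotomy a b with hab | rfl | hab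
  · have := hf.le_slope_of_hasDerivAt ha hb hab hf'
    rw [slope_def_field, le_div_iff₀ (sub_pos.2 hab)] at this
    linarith
  · simp
  · have := hf.slope_le_of_hasDerivAt hb ha hab hf'
    rw [slope_def_field, div_le_iff₀ (sub_pos.2 hab)] at this
    linarith

theorem uniform_convexity_abs_rpow {p : ℝ} (hp₁ : 1 < p) (hp₂ : p ≤ 2) (a b : ℝ) :
    (p - 1) / 2 * ((|a| + |b|) ^ (p - 2) * (b - a) ^ 2) ≤
      1 / p * |b| ^ p - 1 / p * |a| ^ p - dualityMap p a * (b - a) := by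
  set R := |a| + |b|
  set k := (p - 1) * R ^ (p - 2) with hk
  have hψ : ∀ x, HasDerivAt (fun t => |t| ^ p / p - k / 2 * t ^ 2) (dualityMap p x - k * x) x :=
    fun x => by
      refine ((hasDerivAt_abs_rpow_div hp₁ x).sub
        ((hasDerivAt_pow 2 x).const_mul (k / 2))).congr_deriv ?_
      ring
  -- `|t|^p/p - k t²/2` is convex on `[-R, R]` since its derivative `J_p(t) - k t` is monotone there
  have hconv : ConvexOn ℝ (Set.Icc (-R) R) fun t => |t| ^ p / p - k / 2 * t ^ 2 := by
    refine MonotoneOn.convexOn_of_deriv (convex_Icc _ _)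
      (fun x _ => (hψ x).continuousAt.continuousWithinAt)
      (fun x _ => (hψ x).differentiableAt.differentiableWithinAt) ?_
    rw [interior_Icc]
    intro x hx y hy hxy
    rw [(hψ x).deriv, (hψ y).deriv]
    linarith [mul_sub_le_dualityMap_sub_dualityMap hp₁ hp₂ hx.1.le hxy hy.2.le]
  have hmem : ∀ {c}, |c| ≤ R → c ∈ Set.Icc (-R) R := abs_le.1
  have := hconv.add_mul_sub_le_of_hasDerivAt (hmem (le_add_of_nonneg_right (abs_nonneg b)))
    (hmem (le_add_of_nonneg_left (abs_nonneg a))) (hψ a)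
  linear_combination this - (b - a) ^ 2 / 2 * hk

lemma sum_abs_rpow_le_rpow_mul_rpow_of_abs_le {ι : Type*} (s : Finset ι) {p : ℝ} (hp₀ : 0 < p)
    (hp₂ : p < 2) {h t : ι → ℝ} (hht : ∀ i ∈ s, |h i| ≤ t i) :
    ∑ i ∈ s, |h i| ^ p ≤
      (∑ i ∈ s, t i ^ (p - 2) * h i ^ 2) ^ (p / 2) * (∑ i ∈ s, t i ^ p) ^ ((2 - p) / 2) := by
  have ht : ∀ i ∈ s, 0 ≤ t i := fun i hi => (abs_nonneg _).trans (hht i hi)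
  have h2p : 0 < 2 - p := by linarith
  have hholder : HolderTriple 2 (2 * p / (2 - p)) p := by
    refine ⟨?_, two_pos, by positivity⟩
    field_simp
    ring
  -- Hölder with exponents `2` and `2p/(2-p)` applied to `|h| = (t^((p-2)/2) |h|) * t^((2-p)/2)`
  have hprod : ∀ i ∈ s, t i ^ ((p - 2) / 2) * |h i| * t i ^ ((2 - p) / 2) = |h i| := by
    intro i hi
    rcases (ht i hi).eq_or_lt with h0 | hpos
    · have : h i = 0 := abs_nonpos_iff.1 (h0 ▸ hht i hi)
      simp [this]
    · rw [mul_right_comm, ← rpow_add hpos, show (p - 2) / 2 + (2 - p) / 2 = 0 by ring, rpow_zero,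
        one_mul]
  have hfirst : ∀ i ∈ s, (t i ^ ((p - 2) / 2) * |h i|) ^ (2 : ℝ) = t i ^ (p - 2) * h i ^ 2 := by
    intro i hi
    rw [mul_rpow (rpow_nonneg (ht i hi) _) (abs_nonneg _), ← rpow_mul (ht i hi), rpow_two,
      sq_abs]
    ring_nf
  have hsecond : ∀ i ∈ s, (t i ^ ((2 - p) / 2)) ^ (2 * p / (2 - p)) = t i ^ p := by
    intro i hi
    rw [← rpow_mul (ht i hi)]
    congr 1
    field_simp
  have := Lr_rpow_le_Lp_mul_Lq_of_nonneg s (f := fun i => t i ^ ((p - 2) / 2) * |h i|)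
    (g := fun i => t i ^ ((2 - p) / 2)) hholder
    (fun i hi => mul_nonneg (rpow_nonneg (ht i hi) _) (abs_nonneg (h i)))
    (fun i hi => rpow_nonneg (ht i hi) _)
  rwa [sum_congr rfl fun i hi => congrArg (· ^ p) (hprod i hi), sum_congr rfl hfirst,
    sum_congr rfl hsecond, show p / (2 * p / (2 - p)) = (2 - p) / 2 by field_simp] at this

lemma Lp_sq_le_weighted_sq_mul_Lp_rpow {ι : Type*} (s : Finset ι) {p : ℝ} (hp₀ : 0 < p)
    (hp₂ : p < 2) {h t : ι → ℝ} (hht : ∀ i ∈ s, |h i| ≤ t i) :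
    ((∑ i ∈ s, |h i| ^ p) ^ (1 / p)) ^ 2 ≤
      (∑ i ∈ s, t i ^ (p - 2) * h i ^ 2) * ((∑ i ∈ s, t i ^ p) ^ (1 / p)) ^ (2 - p) := by
  have ht : ∀ i ∈ s, 0 ≤ t i := fun i hi => (abs_nonneg _).trans (hht i hi)
  have hW : 0 ≤ ∑ i ∈ s, t i ^ (p - 2) * h i ^ 2 :=
    sum_nonneg fun i hi => mul_nonneg (rpow_nonneg (ht i hi) _) (sq_nonneg _)
  have hS : 0 ≤ ∑ i ∈ s, t i ^ p := sum_nonneg fun i hi => rpow_nonneg (ht i hi) _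
  have hA : 0 ≤ ∑ i ∈ s, |h i| ^ p := sum_nonneg fun i _ => rpow_nonneg (abs_nonneg _) _
  calc ((∑ i ∈ s, |h i| ^ p) ^ (1 / p)) ^ 2 = (∑ i ∈ s, |h i| ^ p) ^ (2 / p) := by
        rw [← rpow_natCast, ← rpow_mul hA]
        ring_nf
    _ ≤ ((∑ i ∈ s, t i ^ (p - 2) * h i ^ 2) ^ (p / 2) *
          (∑ i ∈ s, t i ^ p) ^ ((2 - p) / 2)) ^ (2 / p) := by
        gcongr
        exact sum_abs_rpow_le_rpow_mul_rpow_of_abs_le s hp₀ hp₂ hht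
    _ = _ := by
        rw [mul_rpow (rpow_nonneg hW _) (rpow_nonneg hS _), ← rpow_mul hW, ← rpow_mul hS,
          ← rpow_mul hS, show p / 2 * (2 / p) = 1 by field_simp, rpow_one]
        congr 2
        field_simp

/-- uniform convexity inequality for `(1/p)‖·‖_p^p`, `1 < p < 2`:
there is a constant `C_p > 0` depending only on `p` such that for all `d` and
all `w, w̄ ∈ ℝᵈ` with `(w, w̄) ≠ (0, 0)`,
`(1/p)‖w̄‖_p^p − (1/p)‖w‖_p^p − ⟨J_p(w), w̄ − w⟩
   ≥ C_p (‖w̄‖_p + ‖w‖_p)^{−(2−p)} ‖w̄ − w‖_p²`. -/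
theorem uniform_convexity_lp (p : ℝ) (hp1 : 1 < p) (hp2 : p < 2) :
    ∃ C > 0, ∀ (d : ℕ) (w wbar : Fin d → ℝ), ¬(w = 0 ∧ wbar = 0) →
      C * ((∑ j, |wbar j| ^ p) ^ (1 / p) + (∑ j, |w j| ^ p) ^ (1 / p)) ^ (-(2 - p))
          * ((∑ j, |wbar j - w j| ^ p) ^ (1 / p)) ^ (2 : ℕ)
        ≤ 1 / p * ∑ j, |wbar j| ^ p - 1 / p * ∑ j, |w j| ^ p
            - ∑ j, (Real.sign (w j) * |w j| ^ (p - 1)) * (wbar j - w j) := by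
  refine ⟨(p - 1) / 2, by linarith, fun d w wbar _ => ?_⟩
  set K := (∑ j, |wbar j| ^ p) ^ (1 / p) + (∑ j, |w j| ^ p) ^ (1 / p)
  set W := ∑ j, (|w j| + |wbar j|) ^ (p - 2) * (wbar j - w j) ^ 2
  have hK : 0 ≤ K := by positivity
  have hsum : (p - 1) / 2 * W ≤ 1 / p * ∑ j, |wbar j| ^ p - 1 / p * ∑ j, |w j| ^ p
      - ∑ j, (Real.sign (w j) * |w j| ^ (p - 1)) * (wbar j - w j) := by
    rw [mul_sum]
    refine (sum_le_sum fun j _ =>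
      uniform_convexity_abs_rpow hp1 hp2.le (w j) (wbar j)).trans_eq ?_
    simp only [sum_sub_distrib, ← mul_sum]
    rfl
  have hminkowski : (∑ j, (|w j| + |wbar j|) ^ p) ^ (1 / p) ≤ K :=
    (Lp_add_le_of_nonneg univ hp1.le (fun j _ => abs_nonneg (w j))
      (fun j _ => abs_nonneg (wbar j))).trans_eq (add_comm _ _)
  have hnorm : ((∑ j, |wbar j - w j| ^ p) ^ (1 / p)) ^ 2 ≤ W * K ^ (2 - p) := by
    refine (Lp_sq_le_weighted_sq_mul_Lp_rpow univ (by linarith) hp2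
      fun j _ => (abs_sub _ _).trans_eq (add_comm _ _)).trans ?_
    gcongr
  calc (p - 1) / 2 * K ^ (-(2 - p)) * ((∑ j, |wbar j - w j| ^ p) ^ (1 / p)) ^ 2
      ≤ (p - 1) / 2 * K ^ (-(2 - p)) * (W * K ^ (2 - p)) := by gcongr
    _ = (p - 1) / 2 * W * ((K ^ (2 - p))⁻¹ * K ^ (2 - p)) := by rw [rpow_neg hK]; ring
    -- only `≤ 1` here: at `K = 0` (both vectors zero) the junk value `0⁻¹ = 0` enters
    _ ≤ (p - 1) / 2 * W := mul_le_of_le_one_right (by positivity) inv_mul_le_one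
    _ ≤ _ := hsum
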